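/- Let M = ⟨W,R,V⟩ be a Kripke model, and let M^r = ⟨W, R^r, V⟩ where R^r = R ∪ {⟨x,x⟩ : x ∈ W} is the reflexive closure. Then for every modal formula α (in the language with □) and every x ∈ W: M, x satisfies α∘ under the reflexive-insensitive semantics iff M^r, x satisfies α under the standard Kripke semantics. -/
import Mathlib


/-- Formulas of the language L∘. -/
inductive RIForm : Type where
  | var : Nat → RIForm
  | neg : RIForm → RIForm
  | and : RIForm → RIForm → RIForm
  | circ : RIForm → RIForm
deriving DecidableEq

def RIForm.imp (φ ψ : RIForm) : RIForm := .neg (.and φ (.neg ψ))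
def RIForm.or (φ ψ : RIForm) : RIForm := .neg (.and (.neg φ) (.neg ψ))
def RIForm.top : RIForm := .neg (.and (.var 0) (.neg (.var 0)))
def RIForm.bot : RIForm := .and (.var 0) (.neg (.var 0))
def RIForm.iff (φ ψ : RIForm) : RIForm := .and (φ.imp ψ) (ψ.imp φ)

/-- Reflexive-insensitive satisfaction. -/
def riSat {W : Type} (R : W → W → Prop) (V : Nat → W → Prop) : W → RIForm → Prop
  | w, .var p => V p w
  | w, .neg φ => ¬ riSat R V w φ
  | w, .and φ ψ => riSat R V w φ ∧ riSat R V w ψ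
  | w, .circ φ => ¬ riSat R V w φ ∨ ∀ x, R w x → riSat R V x φ

/-- Validity on a frame under the reflexive-insensitive semantics. -/
def riValid {W : Type} (R : W → W → Prop) (φ : RIForm) : Prop :=
  ∀ V w, riSat R V w φ

/-- Formulas of the basic modal language with □. -/
inductive MForm : Type where
  | var : Nat → MForm
  | neg : MForm → MForm
  | and : MForm → MForm → MForm
  | box : MForm → MForm
deriving DecidableEq

def MForm.imp (φ ψ : MForm) : MForm := .neg (.and φ (.neg ψ))
def MForm.diam (φ : MForm) : MForm := .neg (.box (.neg φ))

/-- Standard Kripke satisfaction. -/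
def msat {W : Type} (R : W → W → Prop) (V : Nat → W → Prop) : W → MForm → Prop
  | w, .var p => V p w
  | w, .neg φ => ¬ msat R V w φ
  | w, .and φ ψ => msat R V w φ ∧ msat R V w ψ
  | w, .box φ => ∀ x, R w x → msat R V x φ

/-- The ∘-translation: (□φ)∘ = ∘(φ∘) ∧ φ∘. -/
def MForm.trans : MForm → RIForm
  | .var p => .var p
  | .neg φ => .neg φ.trans
  | .and φ ψ => .and φ.trans ψ.trans
  | .box φ => .and (.circ φ.trans) φ.trans

theorem bridge_lemma {W : Type} (R : W → W → Prop) (V : Nat → W → Prop)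
    (α : MForm) (x : W) :
    riSat R V x α.trans ↔ msat (fun a b => R a b ∨ a = b) V x α := by
  induction α generalizing x with
  | var p => simp [MForm.trans, riSat, msat]
  | neg φ ih => simp [MForm.trans, riSat, msat, ih]
  | and φ ψ ih1 ih2 => simp [MForm.trans, riSat, msat, ih1, ih2]
  | box φ ih =>
    simp only [MForm.trans, riSat, msat, ih]
    constructor
    · rintro ⟨h1 | h1, h2⟩ y (hy | rfl)
      · exact absurd h2 h1
      · exact absurd h2 h1
      · exact h1 y hy
      · exact h2
    · intro h
      exact ⟨Or.inr fun y hy => h y (Or.inl hy), h x (Or.inr rfl)⟩
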